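/- The product of all vertex stabilizers equals the identity, Π_{v∈V} S_v = I, and the product of all plaquette stabilizers equals the identity, Π_{v∈V} S_{p(v)} = I. Consequently, the projection onto the orthogonal complement of the code space satisfies Q⊥ ≤ Σ_{j ∈ 𝒮 \ {p*, v*}} P_j^−, where Q = Π_{j∈𝒮} P_j^+ and Q⊥ = I − Q. -/

import Mathlib

open scoped Matrix ComplexOrder

attribute [local instance] Matrix.normedAddCommGroup Matrix.normedSpace

namespace Toric

variable (L : ℕ) [NeZero L]

/-- Vertices of the periodic `L × L` lattice. -/
abbrev V := ZMod L × ZMod L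

/-- Edges: `(v, 0)` is the horizontal edge from `v` to `v + (1,0)`,
`(v, 1)` the vertical edge from `v` to `v + (0,1)`. -/
abbrev E := V L × Fin 2

/-- Operators on the `2L²` qubits: complex matrices indexed by `E → Fin 2`. -/
abbrev Op := Matrix (E L → Fin 2) (E L → Fin 2) ℂ

/-- Pauli `X` on edge `e`. -/
noncomputable def Xop (e : E L) : Op L := fun σ τ =>
  if τ e = 1 - σ e ∧ ∀ e' ≠ e, τ e' = σ e' then 1 else 0

/-- Pauli `Z` on edge `e`. -/
noncomputable def Zop (e : E L) : Op L :=
  Matrix.diagonal fun σ => (-1 : ℂ) ^ (σ e : ℕ)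

/-- Vertex stabilizer at `v`. -/
noncomputable def Sv (v : V L) : Op L :=
  Xop L (v, 0) * Xop L (v, 1) * Xop L (v - (1, 0), 0) * Xop L (v - (0, 1), 1)

/-- Plaquette stabilizer with south-west corner `v`. -/
noncomputable def Sp (v : V L) : Op L :=
  Zop L (v, 0) * Zop L (v, 1) * Zop L (v + (1, 0), 1) * Zop L (v + (0, 1), 0)

/-- Index set of stabilizer generators: `inl v` is the vertex generator at `v`,
`inr v` is the plaquette generator `p(v)`. -/
abbrev Gen := V L ⊕ V L

/-- The stabilizer associated with a generator index. -/
noncomputable def stab : Gen L → Op L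
  | Sum.inl v => Sv L v
  | Sum.inr v => Sp L v

/-- The starred vertex `v* = (1,1)`. -/
def vStar : Gen L := Sum.inl (1, 1)

/-- The starred plaquette `p* = p(0,0)`. -/
def pStar : Gen L := Sum.inr (0, 0)

/-- The correction operators. -/
noncomputable def corr : Gen L → Op L
  | Sum.inl (r, s) =>
      if (r, s) = ((1 : ZMod L), (1 : ZMod L)) then 1
      else if s ≠ 1 then Zop L ((r, s - 1), 1)
      else Zop L ((r - 1, 1), 0)
  | Sum.inr (r, s) =>
      if (r, s) = ((0 : ZMod L), (0 : ZMod L)) then 1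
      else if s ≠ 0 then Xop L ((r, s + 1), 0)
      else Xop L ((r + 1, 0), 1)

/-- `P_j^+ = (I + S_j)/2`. -/
noncomputable def Pplus (j : Gen L) : Op L := (2⁻¹ : ℂ) • (1 + stab L j)

/-- `P_j^- = (I - S_j)/2`. -/
noncomputable def Pminus (j : Gen L) : Op L := (2⁻¹ : ℂ) • (1 - stab L j)

/-- The correction channel `T_j(ρ) = P_j⁺ ρ P_j⁺ + C_j P_j⁻ ρ P_j⁻ C_j†` as a linear map. -/
noncomputable def Tj (j : Gen L) : Op L →ₗ[ℂ] Op L :=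
  LinearMap.comp (LinearMap.mulLeft ℂ (Pplus L j)) (LinearMap.mulRight ℂ (Pplus L j)) +
  LinearMap.comp (LinearMap.mulLeft ℂ (corr L j * Pminus L j))
    (LinearMap.mulRight ℂ (Pminus L j * (corr L j)ᴴ))

/-- The Liouvillian `L(ρ) = Σ_j (T_j(ρ) - ρ)`. -/
noncomputable def Liou : Op L →ₗ[ℂ] Op L :=
  ∑ j : Gen L, (Tj L j - LinearMap.id)

/-- The evolution `e^{tL}`. -/
noncomputable def expL (t : ℝ) : Op L →L[ℂ] Op L :=
  letI : IsTopologicalRing (Op L →L[ℂ] Op L) :=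
    @NonUnitalSeminormedRing.toIsTopologicalRing _
      (ContinuousLinearMap.toNormedRing (E := Op L) (𝕜 := ℂ)).toNonUnitalNormedRing.toNonUnitalSeminormedRing
  NormedSpace.exp ((t : ℂ) • (Liou L).toContinuousLinearMap)

/-- Product of a finite family of (commuting) operators, taken in some fixed enumeration order. -/
noncomputable def listProd {ι : Type*} [Fintype ι] (f : ι → Op L) : Op L :=
  ((Finset.univ : Finset ι).toList.map f).prod

/-- Logical `X̄₁`. -/
noncomputable def X1bar : Op L := listProd L fun s : ZMod L => Xop L ((0, s), 0)

/-- Logical `Z̄₁`. -/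
noncomputable def Z1bar : Op L := listProd L fun r : ZMod L => Zop L ((r, 1), 0)

/-- Logical `X̄₂`. -/
noncomputable def X2bar : Op L := listProd L fun r : ZMod L => Xop L ((r, 0), 1)

/-- Logical `Z̄₂`. -/
noncomputable def Z2bar : Op L := listProd L fun s : ZMod L => Zop L ((1, s), 1)

/-- The single-qubit Pauli matrices `I, X, Y, Z`. -/
noncomputable def pauli : Fin 4 → Matrix (Fin 2) (Fin 2) ℂ :=
  ![1, !![0, 1; 1, 0], !![0, -Complex.I; Complex.I, 0], !![1, 0; 0, -1]]

/-- Logical counterparts `Ī, X̄₁, Ȳ₁, Z̄₁` on the first logical qubit. -/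
noncomputable def logical1 : Fin 4 → Op L :=
  ![1, X1bar L, Complex.I • (X1bar L * Z1bar L), Z1bar L]

/-- Logical counterparts `Ī, X̄₂, Ȳ₂, Z̄₂` on the second logical qubit. -/
noncomputable def logical2 : Fin 4 → Op L :=
  ![1, X2bar L, Complex.I • (X2bar L * Z2bar L), Z2bar L]

/-- Logical counterpart `P̄ = P̄₁ P̄₂` of the two-qubit Pauli indexed by `(a, b)`. -/
noncomputable def logicalP (a b : Fin 4) : Op L := logical1 L a * logical2 L b

/-- `⟨Ψ| P₁ ⊗ P₂ |Ψ⟩` for the two-qubit Pauli indexed by `(a, b)`. -/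
noncomputable def expval (Ψ : Fin 2 → Fin 2 → ℂ) (a b : Fin 4) : ℂ :=
  ∑ x : Fin 2, ∑ x' : Fin 2, ∑ y : Fin 2, ∑ y' : Fin 2,
    (starRingEnd ℂ) (Ψ x y) * pauli a x x' * pauli b y y' * Ψ x' y'

/-- The qubit `A₁`. -/
def A1 : E L := (((0 : ZMod L), (1 : ZMod L)), 0)

/-- The qubit `A₂`. -/
def A2 : E L := (((1 : ZMod L), (0 : ZMod L)), 1)

/-- The qubits `B = {((0,s),0) : s ≠ 1}`. -/
def Bfin : Finset (E L) :=
  (Finset.univ.filter fun s : ZMod L => s ≠ 1).image fun s => (((0 : ZMod L), s), (0 : Fin 2))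

/-- The qubits `C = {((r,1),0) : r ≠ 0}`. -/
def Cfin : Finset (E L) :=
  (Finset.univ.filter fun r : ZMod L => r ≠ 0).image fun r => ((r, (1 : ZMod L)), (0 : Fin 2))

/-- The qubits `B' = {((r,0),1) : r ≠ 1}`. -/
def B'fin : Finset (E L) :=
  (Finset.univ.filter fun r : ZMod L => r ≠ 1).image fun r => ((r, (0 : ZMod L)), (1 : Fin 2))

/-- The qubits `C' = {((1,s),1) : s ≠ 0}`. -/
def C'fin : Finset (E L) :=
  (Finset.univ.filter fun s : ZMod L => s ≠ 0).image fun s => (((1 : ZMod L), s), (1 : Fin 2))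

/-- The remaining qubits `D`. -/
def Dfin : Finset (E L) :=
  Finset.univ \ ({A1 L, A2 L} ∪ Bfin L ∪ B'fin L ∪ Cfin L ∪ C'fin L)

/-- The initial state `ρ₀`: `|Ψ⟩⟨Ψ|` on `A₁A₂`, `|+⟩⟨+|` on `B ∪ B'`, `|0⟩⟨0|` on `C ∪ C'`,
and the arbitrary state `ρ_D` on the remaining qubits `D`. -/
noncomputable def rho0 (Ψ : Fin 2 → Fin 2 → ℂ)
    (ρD : Matrix ({e // e ∈ Dfin L} → Fin 2) ({e // e ∈ Dfin L} → Fin 2) ℂ) : Op L :=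
  fun σ τ =>
    Ψ (σ (A1 L)) (σ (A2 L)) * (starRingEnd ℂ) (Ψ (τ (A1 L)) (τ (A2 L))) *
    (∏ _e ∈ Bfin L ∪ B'fin L, (2⁻¹ : ℂ)) *
    (∏ e ∈ Cfin L ∪ C'fin L, if σ e = 0 ∧ τ e = 0 then (1 : ℂ) else 0) *
    ρD (fun d => σ d.1) (fun d => τ d.1)

/-- The projection `Q` onto the code space. -/
noncomputable def Qproj : Op L := listProd L fun j : Gen L => Pplus L j

/-- The projection `Q⊥ = I - Q` onto the orthogonal complement of the code space. -/
noncomputable def Qperp : Op L := 1 - Qproj L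

end Toric

/-- The positive semidefinite square root of a positive semidefinite matrix (as defined in the
older Mathlib, where it was `Matrix.PosSemidef.sqrt`). -/
noncomputable def Matrix.PosSemidef.sqrt {n : Type*} [Fintype n] [DecidableEq n] {𝕜 : Type*}
    [RCLike 𝕜] {A : Matrix n n 𝕜} (hA : A.PosSemidef) : Matrix n n 𝕜 :=
  hA.1.eigenvectorUnitary.1 * Matrix.diagonal ((↑) ∘ (√·) ∘ hA.1.eigenvalues) *
  (star hA.1.eigenvectorUnitary : Matrix n n 𝕜)

/-- The trace norm `‖A‖₁ = tr √(AᴴA)`. -/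
noncomputable def traceNorm {m : Type*} [Fintype m] [DecidableEq m] (A : Matrix m m ℂ) : ℝ :=
  ((Matrix.posSemidef_conjTranspose_mul_self A).sqrt.trace).re

/-!
Each stabilizer is a Pauli string: `S_v = X^{a_v}` and `S_{p(v)} = Z^{b_v}`, where `a_v`, `b_v`
are the `𝔽₂`-vectors of the edges at `v` and around `p(v)`. Every edge lies at two vertices and on
two plaquettes, so `∑ a_v = ∑ b_v = 0`, which gives both product identities; a star and a
plaquette share an even number of edges, so all stabilizers commute. Hence `S_{v*}` is the product
of the other vertex stabilizers, so `P_{v*}⁺` fixes `∏_{j ≠ p*, v*} P_j⁺`, and likewise for `p*`: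
`Q` is the product of the `P_j⁺` over `𝒮 \ {p*, v*}` alone. The bound is then the union bound
`1 - ∏ pᵢ ≤ ∑ (1 - pᵢ)` for commuting projections `pᵢ`.
-/

open scoped MatrixOrder IsMulCommutative

section StarProjection

variable {R : Type*} [Ring R] [StarRing R]

theorem IsStarProjection.list_prod {l : List R} (hl : ∀ p ∈ l, IsStarProjection p)
    (hc : ∀ p ∈ l, ∀ q ∈ l, Commute p q) : IsStarProjection l.prod := by
  induction l with
  | nil => exact .one R
  | cons p l ih =>
    rw [List.prod_cons]
    exact (hl p List.mem_cons_self).mul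
      (ih (fun q hq => hl q (.tail _ hq)) fun q hq r hr => hc q (.tail _ hq) r (.tail _ hr))
      (Commute.list_prod_right _ _ fun q hq => hc p List.mem_cons_self q (.tail _ hq))

/-- Union bound for commuting projections: `1 - p q = (1 - p) + (1 - q) - (1 - p) (1 - q)` and
the last term is itself a projection, hence nonnegative. -/
theorem one_sub_list_prod_le_sum_one_sub [PartialOrder R] [StarOrderedRing R] {l : List R}
    (hl : ∀ p ∈ l, IsStarProjection p) (hc : ∀ p ∈ l, ∀ q ∈ l, Commute p q) :
    1 - l.prod ≤ (l.map (1 - ·)).sum := by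
  induction l with
  | nil => simp
  | cons p l ih =>
    have hl' : ∀ q ∈ l, IsStarProjection q := fun q hq => hl q (.tail _ hq)
    have hc' : ∀ q ∈ l, ∀ r ∈ l, Commute q r := fun q hq r hr => hc q (.tail _ hq) r (.tail _ hr)
    have hp := hl p List.mem_cons_self
    have hq := IsStarProjection.list_prod hl' hc'
    have hpq : Commute p l.prod :=
      Commute.list_prod_right _ _ fun q hq => hc p List.mem_cons_self q (.tail _ hq)
    have hnonneg : 0 ≤ (1 - p) * (1 - l.prod) :=
      (hp.one_sub.mul hq.one_sub
        ((Commute.one_left _).sub_left ((Commute.one_right p).sub_right hpq))).nonneg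
    rw [List.prod_cons, List.map_cons, List.sum_cons]
    calc 1 - p * l.prod = (1 - p) + (1 - l.prod) - (1 - p) * (1 - l.prod) := by noncomm_ring
      _ ≤ (1 - p) + (1 - l.prod) := sub_le_self _ hnonneg
      _ ≤ (1 - p) + (l.map (1 - ·)).sum := by gcongr; exact ih hl' hc'

end StarProjection

section HalfSmulOneAdd

variable {R : Type*} [Ring R] [Algebra ℂ R]

theorem half_smul_one_add_mul_of_mul_eq {s x : R} (h : s * x = x) :
    ((2⁻¹ : ℂ) • (1 + s)) * x = x := by
  rw [smul_mul_assoc, add_mul, one_mul, h, ← two_smul ℂ, smul_smul]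
  norm_num

theorem mul_half_smul_one_add_self {s : R} (hs : s * s = 1) :
    s * ((2⁻¹ : ℂ) • (1 + s)) = (2⁻¹ : ℂ) • (1 + s) := by
  rw [mul_smul_comm, mul_add, mul_one, hs, add_comm]

theorem IsSelfAdjoint.isStarProjection_half_smul_one_add [StarRing R] [StarModule ℂ R] {s : R}
    (hs : IsSelfAdjoint s) (hss : s * s = 1) : IsStarProjection ((2⁻¹ : ℂ) • (1 + s)) where
  isIdempotentElem := half_smul_one_add_mul_of_mul_eq (mul_half_smul_one_add_self hss)
  isSelfAdjoint := .smul (by simp [IsSelfAdjoint]) ((IsSelfAdjoint.one R).add hs)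

end HalfSmulOneAdd

theorem Finset.eq_prod_erase_of_mul_self_eq_one {ι M : Type*} [CommMonoid M] [DecidableEq ι]
    {s : Finset ι} {f : ι → M} {i : ι} (hi : i ∈ s) (hf : f i * f i = 1)
    (h : ∏ j ∈ s, f j = 1) : f i = ∏ j ∈ s.erase i, f j :=
  left_inv_eq_right_inv hf (by rwa [Finset.mul_prod_erase s f hi])

theorem Finset.prod_mul_prod_eq_of_subset {ι M : Type*} [CommMonoid M] [DecidableEq ι]
    {s t : Finset ι} (hst : s ⊆ t) {f g : ι → M} (h : ∀ i ∈ s, g i * f i = f i) :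
    (∏ i ∈ s, g i) * ∏ i ∈ t, f i = ∏ i ∈ t, f i := by
  rw [← Finset.prod_sdiff hst, mul_left_comm, ← Finset.prod_mul_distrib,
    Finset.prod_congr rfl h]

theorem fin_two_add_self (x : Fin 2) : x + x = 0 := by
  revert x
  decide

theorem Pi.fin_two_add_self {ι : Type*} (a : ι → Fin 2) : a + a = 0 :=
  funext fun i => _root_.fin_two_add_self (a i)

theorem neg_one_pow_val_add_fin_two {R : Type*} [Ring R] (x y : Fin 2) :
    (-1 : R) ^ ((x + y : Fin 2) : ℕ) = (-1) ^ (x : ℕ) * (-1) ^ (y : ℕ) := by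
  rw [Fin.val_add, ← neg_one_pow_eq_pow_mod_two, pow_add]

namespace Matrix

variable {ι : Type*} [Fintype ι]

/-- The Pauli string `⊗ᵢ Xᵢ^{aᵢ}`, acting on basis states by `σ ↦ σ + a`. -/
def pauliXString (a : ι → Fin 2) : Matrix (ι → Fin 2) (ι → Fin 2) ℂ :=
  of fun σ τ => if τ = σ + a then 1 else 0

/-- The Pauli string `⊗ᵢ Zᵢ^{bᵢ}`. -/
def pauliZString (b : ι → Fin 2) : Matrix (ι → Fin 2) (ι → Fin 2) ℂ :=
  diagonal fun σ => (-1) ^ ((b ⬝ᵥ σ : Fin 2) : ℕ)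

@[simp]
theorem pauliXString_zero : pauliXString (0 : ι → Fin 2) = 1 := by
  ext σ τ
  simp [pauliXString, one_apply, eq_comm]

@[simp]
theorem pauliZString_zero : pauliZString (0 : ι → Fin 2) = 1 := by
  simp [pauliZString]

theorem isSelfAdjoint_pauliZString (b : ι → Fin 2) : IsSelfAdjoint (pauliZString b) := by
  simp [IsSelfAdjoint, pauliZString, star_eq_conjTranspose, diagonal_conjTranspose]

theorem isSelfAdjoint_pauliXString (a : ι → Fin 2) : IsSelfAdjoint (pauliXString a) := by
  ext σ τ
  have : σ = τ + a ↔ τ = σ + a := by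
    constructor <;> rintro rfl <;> rw [add_assoc, Pi.fin_two_add_self a, add_zero]
  simp [pauliXString, this]

variable [DecidableEq ι]

theorem pauliXString_add (a b : ι → Fin 2) :
    pauliXString (a + b) = pauliXString a * pauliXString b := by
  ext σ τ
  simp only [pauliXString, mul_apply, of_apply, ite_mul, one_mul, zero_mul, Finset.sum_ite_eq',
    Finset.mem_univ, if_true, add_assoc]

theorem pauliZString_add (a b : ι → Fin 2) :
    pauliZString (a + b) = pauliZString a * pauliZString b := by
  simp [pauliZString, diagonal_mul_diagonal, add_dotProduct, neg_one_pow_val_add_fin_two]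

theorem pauliXString_mul_pauliZString (a b : ι → Fin 2) :
    pauliXString a * pauliZString b =
      (-1 : ℂ) ^ ((b ⬝ᵥ a : Fin 2) : ℕ) • (pauliZString b * pauliXString a) := by
  ext σ τ
  by_cases h : τ = σ + a
  · subst h
    simp [pauliXString, pauliZString, dotProduct_add, neg_one_pow_val_add_fin_two, mul_comm]
  · simp [pauliXString, pauliZString, h]

theorem pauliXString_commute_pauliZString {a b : ι → Fin 2} (h : b ⬝ᵥ a = 0) :
    Commute (pauliXString a) (pauliZString b) := by
  rw [Commute, SemiconjBy, pauliXString_mul_pauliZString, h]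
  simp

theorem pauliXString_mul_self (a : ι → Fin 2) : pauliXString a * pauliXString a = 1 := by
  rw [← pauliXString_add, Pi.fin_two_add_self a, pauliXString_zero]

theorem pauliZString_mul_self (b : ι → Fin 2) : pauliZString b * pauliZString b = 1 := by
  rw [← pauliZString_add, Pi.fin_two_add_self b, pauliZString_zero]

theorem list_prod_map_pauliXString {κ : Type*} (g : κ → ι → Fin 2) (l : List κ) :
    (l.map fun k => pauliXString (g k)).prod = pauliXString (l.map g).sum := by
  induction l with
  | nil => simp
  | cons k l ih => simp [pauliXString_add, ih]

theorem list_prod_map_pauliZString {κ : Type*} (g : κ → ι → Fin 2) (l : List κ) :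
    (l.map fun k => pauliZString (g k)).prod = pauliZString (l.map g).sum := by
  induction l with
  | nil => simp
  | cons k l ih => simp [pauliZString_add, ih]

end Matrix

namespace Toric

open Matrix

variable (L : ℕ) [NeZero L]

theorem Xop_eq_pauliXString (e : E L) : Xop L e = pauliXString (Pi.single e 1) := by
  ext σ τ
  have hflip : σ + Pi.single e 1 = Function.update σ e (1 - σ e) := by
    ext e'
    rcases eq_or_ne e' e with rfl | he
    · simp only [Pi.add_apply, Pi.single_eq_same, Function.update_self]
      generalize σ e' = x
      revert x
      decide
    · simp [he]
  simp only [Xop, pauliXString, of_apply, hflip, Function.eq_update_iff]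

theorem Zop_eq_pauliZString (e : E L) : Zop L e = pauliZString (Pi.single e 1) := by
  simp [Zop, pauliZString, single_dotProduct]

def starSupport (v : V L) : E L → Fin 2 :=
  Pi.single (v, 0) 1 + Pi.single (v, 1) 1 + Pi.single (v - (1, 0), 0) 1 +
    Pi.single (v - (0, 1), 1) 1

def plaquetteSupport (v : V L) : E L → Fin 2 :=
  Pi.single (v, 0) 1 + Pi.single (v, 1) 1 + Pi.single (v + (1, 0), 1) 1 +
    Pi.single (v + (0, 1), 0) 1

theorem Sv_eq_pauliXString (v : V L) : Sv L v = pauliXString (starSupport L v) := by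
  simp only [Sv, starSupport, Xop_eq_pauliXString, pauliXString_add]

theorem Sp_eq_pauliZString (v : V L) : Sp L v = pauliZString (plaquetteSupport L v) := by
  simp only [Sp, plaquetteSupport, Zop_eq_pauliZString, pauliZString_add]

theorem sum_single_add (k : Fin 2) (c : V L) :
    ∑ v : V L, (Pi.single ((v + c, k) : E L) 1 : E L → Fin 2) = ∑ v : V L, Pi.single (v, k) 1 :=
  Equiv.sum_comp (Equiv.addRight c) fun v : V L => (Pi.single ((v, k) : E L) 1 : E L → Fin 2)

theorem sum_starSupport : ∑ v, starSupport L v = 0 := by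
  simp only [starSupport, sub_eq_add_neg, Finset.sum_add_distrib, sum_single_add]
  abel_nf
  simp only [two_zsmul, Pi.fin_two_add_self, add_zero]

theorem sum_plaquetteSupport : ∑ v, plaquetteSupport L v = 0 := by
  simp only [plaquetteSupport, Finset.sum_add_distrib, sum_single_add]
  abel_nf
  simp only [two_zsmul, Pi.fin_two_add_self, add_zero]

theorem plaquetteSupport_dotProduct_starSupport (w v : V L) :
    plaquetteSupport L w ⬝ᵥ starSupport L v = 0 := by
  simp only [plaquetteSupport, starSupport, dotProduct_add, dotProduct_single, Pi.add_apply,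
    Pi.single_apply, Prod.mk.injEq, and_true, and_false, Fin.isValue, zero_ne_one, one_ne_zero,
    mul_one, sub_eq_iff_eq_add, add_right_comm w ((0, 1) : V L) (1, 0)]
  -- Horizontal and vertical shared edges both count `[v - w ∈ {0, (1,0), (0,1), (1,1)}]`.
  abel_nf
  simp only [two_zsmul, fin_two_add_self, add_zero]

theorem listProd_Sv : listProd L (fun v : V L => Sv L v) = 1 := by
  simp only [listProd, Sv_eq_pauliXString, list_prod_map_pauliXString, Finset.sum_map_toList,
    sum_starSupport, pauliXString_zero]

theorem listProd_Sp : listProd L (fun v : V L => Sp L v) = 1 := by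
  simp only [listProd, Sp_eq_pauliZString, list_prod_map_pauliZString, Finset.sum_map_toList,
    sum_plaquetteSupport, pauliZString_zero]

theorem stab_commute (j k : Gen L) : Commute (stab L j) (stab L k) := by
  rcases j with v | v <;> rcases k with w | w <;>
    simp only [stab, Sv_eq_pauliXString, Sp_eq_pauliZString]
  · rw [Commute, SemiconjBy, ← pauliXString_add, ← pauliXString_add, add_comm]
  · exact pauliXString_commute_pauliZString (plaquetteSupport_dotProduct_starSupport L w v)
  · exact (pauliXString_commute_pauliZString (plaquetteSupport_dotProduct_starSupport L v w)).symm
  · rw [Commute, SemiconjBy, ← pauliZString_add, ← pauliZString_add, add_comm]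

theorem stab_mul_self (j : Gen L) : stab L j * stab L j = 1 := by
  rcases j with v | v <;> simp only [stab, Sv_eq_pauliXString, Sp_eq_pauliZString]
  · exact pauliXString_mul_self _
  · exact pauliZString_mul_self _

theorem isSelfAdjoint_stab (j : Gen L) : IsSelfAdjoint (stab L j) := by
  rcases j with v | v <;> simp only [stab, Sv_eq_pauliXString, Sp_eq_pauliZString]
  · exact isSelfAdjoint_pauliXString _
  · exact isSelfAdjoint_pauliZString _

theorem isStarProjection_Pplus (j : Gen L) : IsStarProjection (Pplus L j) :=
  (isSelfAdjoint_stab L j).isStarProjection_half_smul_one_add (stab_mul_self L j)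

theorem Pplus_commute (j k : Gen L) : Commute (Pplus L j) (Pplus L k) :=
  (((Commute.one_left _).add_left ((Commute.one_right _).add_right (stab_commute L j k))).smul_left
    _).smul_right _

theorem Pminus_eq_one_sub_Pplus (j : Gen L) : Pminus L j = 1 - Pplus L j := by
  rw [Pminus, Pplus, eq_sub_iff_add_eq, ← smul_add, sub_add_add_cancel, ← two_smul ℂ, smul_smul]
  norm_num

abbrev stabilizerAlgebra : Subalgebra ℂ (Op L) := Algebra.adjoin ℂ (Set.range (stab L))

instance : IsMulCommutative (stabilizerAlgebra L) :=
  Algebra.isMulCommutative_adjoin ℂ <| by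
    rintro _ ⟨j, rfl⟩ _ ⟨k, rfl⟩
    exact (stab_commute L j k).eq

noncomputable def stabIn (j : Gen L) : stabilizerAlgebra L :=
  ⟨stab L j, Algebra.subset_adjoin ⟨j, rfl⟩⟩

noncomputable def PplusIn (j : Gen L) : stabilizerAlgebra L := (2⁻¹ : ℂ) • (1 + stabIn L j)

theorem stabIn_mul_self (j : Gen L) : stabIn L j * stabIn L j = 1 :=
  Subtype.ext (stab_mul_self L j)

theorem list_prod_map_coe {ι : Type*} (s : Finset ι) (f : ι → stabilizerAlgebra L) :
    (s.toList.map fun i => (f i : Op L)).prod = ↑(∏ i ∈ s, f i) := by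
  rw [← Finset.prod_map_toList, SubmonoidClass.coe_list_prod, List.map_map]
  rfl

theorem prod_stabIn_inl : ∏ v, stabIn L (.inl v) = 1 :=
  Subtype.ext <| (list_prod_map_coe L _ _).symm.trans (listProd_Sv L)

theorem prod_stabIn_inr : ∏ v, stabIn L (.inr v) = 1 :=
  Subtype.ext <| (list_prod_map_coe L _ _).symm.trans (listProd_Sp L)

abbrev unstarredGen : Finset (Gen L) := Finset.univ \ {pStar L, vStar L}

theorem stabIn_vStar :
    stabIn L (vStar L) = ∏ j ∈ (Finset.univ.erase (1, 1)).map .inl, stabIn L j := by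
  rw [Finset.prod_map]
  exact Finset.eq_prod_erase_of_mul_self_eq_one (f := fun v => stabIn L (.inl v))
    (Finset.mem_univ _) (stabIn_mul_self L _) (prod_stabIn_inl L)

theorem stabIn_pStar :
    stabIn L (pStar L) = ∏ j ∈ (Finset.univ.erase (0, 0)).map .inr, stabIn L j := by
  rw [Finset.prod_map]
  exact Finset.eq_prod_erase_of_mul_self_eq_one (f := fun v => stabIn L (.inr v))
    (Finset.mem_univ _) (stabIn_mul_self L _) (prod_stabIn_inr L)

theorem PplusIn_mul_prod_unstarredGen {j₀ : Gen L} {U : Finset (Gen L)}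
    (hU : U ⊆ unstarredGen L) (h : stabIn L j₀ = ∏ j ∈ U, stabIn L j) :
    PplusIn L j₀ * ∏ j ∈ unstarredGen L, PplusIn L j = ∏ j ∈ unstarredGen L, PplusIn L j := by
  refine half_smul_one_add_mul_of_mul_eq ?_
  rw [h]
  exact Finset.prod_mul_prod_eq_of_subset hU fun j _ =>
    mul_half_smul_one_add_self (stabIn_mul_self L j)

theorem Qproj_eq_list_prod_unstarredGen :
    Qproj L = ((unstarredGen L).toList.map (Pplus L)).prod := by
  have hv : (Finset.univ.erase (1, 1)).map .inl ⊆ unstarredGen L := by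
    intro j hj
    obtain ⟨v, hv, rfl⟩ := Finset.mem_map.mp hj
    simpa [pStar, vStar] using hv
  have hp : (Finset.univ.erase (0, 0)).map .inr ⊆ unstarredGen L := by
    intro j hj
    obtain ⟨v, hv, rfl⟩ := Finset.mem_map.mp hj
    simpa [pStar, vStar] using hv
  have hpv : pStar L ≠ vStar L := Sum.inr_ne_inl
  have hQ : Qproj L = ↑(∏ j, PplusIn L j) := list_prod_map_coe L Finset.univ (PplusIn L)
  rw [hQ, ← Finset.prod_sdiff (Finset.subset_univ {pStar L, vStar L}),
    Finset.prod_pair hpv, mul_comm, mul_assoc,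
    PplusIn_mul_prod_unstarredGen L hv (stabIn_vStar L),
    PplusIn_mul_prod_unstarredGen L hp (stabIn_pStar L), ← list_prod_map_coe]
  rfl

end Toric

open Toric in
theorem toric_code_stabilizer_products_and_Qperp_bound_general
    (L : ℕ) [NeZero L] :
    listProd L (fun v : V L => Sv L v) = 1 ∧
    listProd L (fun v : V L => Sp L v) = 1 ∧
    ((∑ j ∈ Finset.univ \ ({pStar L, vStar L} : Finset (Gen L)), Pminus L j) -
      Qperp L).PosSemidef := by
  refine ⟨listProd_Sv L, listProd_Sp L, Matrix.le_iff.mp ?_⟩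
  have hbound := one_sub_list_prod_le_sum_one_sub (l := (unstarredGen L).toList.map (Pplus L))
    (List.forall_mem_map.mpr fun j _ => isStarProjection_Pplus L j)
    (List.forall_mem_map.mpr fun j _ => List.forall_mem_map.mpr fun k _ => Pplus_commute L j k)
  simp only [← Qproj_eq_list_prod_unstarredGen, List.map_map, Function.comp_def,
    ← Pminus_eq_one_sub_Pplus, Finset.sum_map_toList] at hbound
  exact hbound

open Toric in
/-- the product of all vertex stabilizers and the product of all plaquette
stabilizers both equal the identity; consequently `Q⊥ ≤ Σ_{j ∈ 𝒮 \ {p*, v*}} P_j⁻`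
(the difference is positive semidefinite). -/
theorem toric_code_stabilizer_products_and_Qperp_bound
    (L : ℕ) [NeZero L] (hL : 2 ≤ L) :
    listProd L (fun v : V L => Sv L v) = 1 ∧
    listProd L (fun v : V L => Sp L v) = 1 ∧
    ((∑ j ∈ Finset.univ \ ({pStar L, vStar L} : Finset (Gen L)), Pminus L j) -
      Qperp L).PosSemidef :=
  toric_code_stabilizer_products_and_Qperp_bound_general L
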